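/- Theorem 3.4, formula (3.17) (analogue of the strong Szegő limit theorem): Assume the Szegő class condition: for every l ∈ ℕ, the partial products ∏_{p=1}^{m} d_{l,l+p} converge, as m → ∞, to a positive limit; set g_l = s_l · ∏_{j=1}^{∞} d_{l,l+j}². Assume moreover that the quantities L_n = ∏_{0 ≤ k ≤ n < j} d_{k,j}² converge as n → ∞ to a limit L > 0. Then lim_{n→∞} D_{0,n} / (∏_{l=0}^{n} g_l) = 1/L. -/

import Mathlib

/-!
Write `P_{k,n} = ∏_{k < j ≤ n} d_{k,j}²`. Splitting the infinite product defining `G_k²` at `n`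
gives `G_k² = P_{k,n} · Lfun n k`, while `D_{0,n} = (∏_{k ≤ n} s_k) ∏_{k ≤ n} P_{k,n}`. Hence
`D_{0,n} / ∏_{l ≤ n} s_l G_l²` is exactly `L_n⁻¹`, which tends to `L⁻¹`.
-/

open Polynomial Filter Finset

/-- The complementary quantity `d_{k,j} = (1 - |γ_{k,j}|²)^{1/2}`. -/
noncomputable def dd (γ : ℕ → ℕ → ℂ) (k j : ℕ) : ℝ :=
  Real.sqrt (1 - ‖γ k j‖ ^ 2)

/-- The pair `(φ_n(·,l), φ♯_n(·,l))` of Szegő-type orthogonal polynomials attached to the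
Schur parameters `γ` and the diagonal `s`, defined by the recurrences
`φ_n(X,l) = d_{l,n+l}⁻¹ (X φ_{n-1}(X,l+1) - γ_{l,n+l} φ♯_{n-1}(X,l))` and
`φ♯_n(X,l) = d_{l,n+l}⁻¹ (-conj(γ_{l,n+l}) X φ_{n-1}(X,l+1) + φ♯_{n-1}(X,l))`,
with `φ_0(X,l) = φ♯_0(X,l) = s_l^{-1/2}`. -/
noncomputable def phiPair (s : ℕ → ℝ) (γ : ℕ → ℕ → ℂ) : ℕ → ℕ → Polynomial ℂ × Polynomial ℂ
  | 0, l => (Polynomial.C (((Real.sqrt (s l))⁻¹ : ℝ) : ℂ),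
             Polynomial.C (((Real.sqrt (s l))⁻¹ : ℝ) : ℂ))
  | n + 1, l =>
      (Polynomial.C (((dd γ l (n + 1 + l))⁻¹ : ℝ) : ℂ) *
         (Polynomial.X * (phiPair s γ n (l + 1)).1 -
           Polynomial.C (γ l (n + 1 + l)) * (phiPair s γ n l).2),
       Polynomial.C (((dd γ l (n + 1 + l))⁻¹ : ℝ) : ℂ) *
         (-(Polynomial.C ((starRingEnd ℂ) (γ l (n + 1 + l))) * Polynomial.X *
             (phiPair s γ n (l + 1)).1) +
           (phiPair s γ n l).2))

/-- The orthogonal polynomial `φ_n(X,l)`. -/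
noncomputable def phi (s : ℕ → ℝ) (γ : ℕ → ℕ → ℂ) (n l : ℕ) : Polynomial ℂ :=
  (phiPair s γ n l).1

/-- The reversed polynomial `φ♯_n(X,l)`. -/
noncomputable def phiSharp (s : ℕ → ℝ) (γ : ℕ → ℕ → ℂ) (n l : ℕ) : Polynomial ℂ :=
  (phiPair s γ n l).2

/-- The determinant `D_{r,q} = (∏_{k=r}^q s_k) ∏_{r ≤ k < j ≤ q} d_{k,j}²` of the positive
definite kernel associated with the parameters `γ`. -/
noncomputable def Ddet (s : ℕ → ℝ) (γ : ℕ → ℕ → ℂ) (r q : ℕ) : ℝ :=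
  (∏ k ∈ Finset.Icc r q, s k) *
    ∏ k ∈ Finset.Icc r q, ∏ j ∈ Finset.Icc (k + 1) q, (dd γ k j) ^ 2

open Topology

lemma dd_pos {γ : ℕ → ℕ → ℂ} {k j : ℕ} (h : ‖γ k j‖ < 1) : 0 < dd γ k j :=
  Real.sqrt_pos.mpr (by nlinarith [norm_nonneg (γ k j)])

lemma Finset.prod_Icc_one_add_eq_prod_Ioc {M : Type*} [CommMonoid M] (f : ℕ → M) (k m : ℕ) :
    ∏ p ∈ Icc 1 m, f (k + p) = ∏ j ∈ Ioc k (k + m), f j := by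
  rw [← Icc_add_one_left_eq_Ioc, ← map_add_left_Icc, prod_map]
  rfl

lemma tendsto_prod_Ioc_of_tendsto_prod_Icc_one_add {M : Type*} [CommMonoid M]
    [TopologicalSpace M] {f : ℕ → M} {k : ℕ} {a : M}
    (h : Tendsto (fun m => ∏ p ∈ Icc 1 m, f (k + p)) atTop (𝓝 a)) :
    Tendsto (fun m => ∏ j ∈ Ioc k m, f j) atTop (𝓝 a) := by
  refine (h.comp (tendsto_sub_atTop_nat k)).congr' ?_
  filter_upwards [eventually_ge_atTop k] with m hm
  rw [Function.comp_apply, prod_Icc_one_add_eq_prod_Ioc, Nat.add_sub_cancel' hm]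

lemma eq_prod_Ioc_mul_of_tendsto {M : Type*} [CommMonoid M] [TopologicalSpace M]
    [ContinuousMul M] [T2Space M] {f : ℕ → M} {k n : ℕ} (hkn : k ≤ n) {a b : M}
    (ha : Tendsto (fun m => ∏ j ∈ Ioc k m, f j) atTop (𝓝 a))
    (hb : Tendsto (fun m => ∏ j ∈ Ioc n m, f j) atTop (𝓝 b)) :
    a = (∏ j ∈ Ioc k n, f j) * b := by
  refine tendsto_nhds_unique ha ((hb.const_mul _).congr' ?_)
  filter_upwards [eventually_ge_atTop n] with m hm
  exact prod_Ioc_consecutive f hkn hm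

lemma Ddet_zero (s : ℕ → ℝ) (γ : ℕ → ℕ → ℂ) (n : ℕ) :
    Ddet s γ 0 n =
      (∏ k ∈ range (n + 1), s k) * ∏ k ∈ range (n + 1), ∏ j ∈ Ioc k n, dd γ k j ^ 2 := by
  simp only [Ddet, Nat.range_succ_eq_Icc_zero, Icc_add_one_left_eq_Ioc]

lemma Ddet_zero_div_prod_eq_inv {s : ℕ → ℝ} {γ : ℕ → ℕ → ℂ} (hs : ∀ l, 0 < s l)
    (hγ : ∀ k j, k < j → ‖γ k j‖ < 1) {G c : ℕ → ℝ} {n : ℕ}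
    (hG : ∀ k ≤ n, G k ^ 2 = (∏ j ∈ Ioc k n, dd γ k j ^ 2) * c k) :
    Ddet s γ 0 n / ∏ l ∈ range (n + 1), s l * G l ^ 2 = (∏ k ∈ range (n + 1), c k)⁻¹ := by
  have hS : ∏ k ∈ range (n + 1), s k ≠ 0 := (prod_pos fun k _ => hs k).ne'
  have hP : ∏ k ∈ range (n + 1), ∏ j ∈ Ioc k n, dd γ k j ^ 2 ≠ 0 :=
    (prod_pos fun k _ => prod_pos fun j hj => pow_pos (dd_pos (hγ k j (mem_Ioc.1 hj).1)) 2).ne'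
  have hG' : ∏ l ∈ range (n + 1), G l ^ 2
      = (∏ k ∈ range (n + 1), ∏ j ∈ Ioc k n, dd γ k j ^ 2) * ∏ k ∈ range (n + 1), c k := by
    rw [← prod_mul_distrib]
    exact prod_congr rfl fun k hk => hG k (Nat.lt_succ_iff.1 (mem_range.1 hk))
  rw [Ddet_zero, prod_mul_distrib, hG', ← mul_assoc, div_mul_eq_div_div,
    div_self (mul_ne_zero hS hP), one_div]

theorem strong_szego_limit_general (s : ℕ → ℝ) (γ : ℕ → ℕ → ℂ)
    (hs : ∀ l, 0 < s l) (hγ : ∀ k j, k < j → ‖γ k j‖ < 1) (G : ℕ → ℝ)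
    (hG : ∀ l, Filter.Tendsto (fun m => ∏ p ∈ Finset.Icc 1 m, dd γ l (l + p))
      Filter.atTop (nhds (G l)))
    (Lfun : ℕ → ℕ → ℝ)
    (hLfun : ∀ n, ∀ k ≤ n,
      Filter.Tendsto (fun m => ∏ j ∈ Finset.Icc (n + 1) m, (dd γ k j) ^ 2)
        Filter.atTop (nhds (Lfun n k)))
    (L : ℝ) (hLpos : 0 < L)
    (hL : Filter.Tendsto (fun n => ∏ k ∈ Finset.range (n + 1), Lfun n k)
      Filter.atTop (nhds L)) :
    Filter.Tendsto (fun n => Ddet s γ 0 n / ∏ l ∈ Finset.range (n + 1), s l * (G l) ^ 2)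
      Filter.atTop (nhds (1 / L)) := by
  have hG_sq (k : ℕ) : Tendsto (fun m => ∏ j ∈ Ioc k m, dd γ k j ^ 2) atTop (𝓝 (G k ^ 2)) :=
    tendsto_prod_Ioc_of_tendsto_prod_Icc_one_add <| by
      simpa only [prod_pow] using (hG k).pow 2
  have hG_split (n k : ℕ) (hkn : k ≤ n) :
      G k ^ 2 = (∏ j ∈ Ioc k n, dd γ k j ^ 2) * Lfun n k := by
    refine eq_prod_Ioc_mul_of_tendsto hkn (hG_sq k) ?_
    simpa only [Icc_add_one_left_eq_Ioc] using hLfun n k hkn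
  rw [one_div]
  exact (hL.inv₀ hLpos.ne').congr fun n =>
    (Ddet_zero_div_prod_eq_inv hs hγ (hG_split n)).symm

/-- Theorem 3.4, formula (3.17) (analogue of the strong Szegő limit theorem): under the Szegő
class condition, with `G l` the (positive) limit of the partial products `∏_{p=1}^m d_{l,l+p}`
and `g_l = s_l (G l)²`, and assuming the quantities
`L_n = ∏_{0 ≤ k ≤ n < j} d_{k,j}² = ∏_{k=0}^n Lfun n k` (where `Lfun n k` is the limit of the
inner partial products `∏_{j=n+1}^m d_{k,j}²`) converge to a limit `L > 0`, one has
`lim_{n→∞} D_{0,n} / (∏_{l=0}^n g_l) = 1/L`. -/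
theorem strong_szego_limit (s : ℕ → ℝ) (γ : ℕ → ℕ → ℂ)
    (hs : ∀ l, 0 < s l) (hγ : ∀ k j, k < j → ‖γ k j‖ < 1) (G : ℕ → ℝ)
    (hGpos : ∀ l, 0 < G l)
    (hG : ∀ l, Filter.Tendsto (fun m => ∏ p ∈ Finset.Icc 1 m, dd γ l (l + p))
      Filter.atTop (nhds (G l)))
    (Lfun : ℕ → ℕ → ℝ)
    (hLfun : ∀ n, ∀ k ≤ n,
      Filter.Tendsto (fun m => ∏ j ∈ Finset.Icc (n + 1) m, (dd γ k j) ^ 2)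
        Filter.atTop (nhds (Lfun n k)))
    (L : ℝ) (hLpos : 0 < L)
    (hL : Filter.Tendsto (fun n => ∏ k ∈ Finset.range (n + 1), Lfun n k)
      Filter.atTop (nhds L)) :
    Filter.Tendsto (fun n => Ddet s γ 0 n / ∏ l ∈ Finset.range (n + 1), s l * (G l) ^ 2)
      Filter.atTop (nhds (1 / L)) :=
  strong_szego_limit_general s γ hs hγ G hG Lfun hLfun L hLpos hL
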